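/- Let 2 ≤ p < ∞, 0 < t < 1, and let f, h ∈ L^p be complex-valued with ‖|f| - |h|‖_p^p < t·‖f - h‖_p^p. Then ‖f + h‖_p^p < (‖f‖_p + ‖h‖_p)^p - (1 - t)·‖f - h‖_p^p. -/

import Mathlib

/-!
Writing `‖a ± b‖² = ‖a‖² + ‖b‖² ± 2⟪a, b⟫` and `(‖a‖ ± ‖b‖)² = ‖a‖² + ‖b‖² ± 2‖a‖‖b‖`, convexity
of `s ↦ s ^ (p / 2)` and `|⟪a, b⟫| ≤ ‖a‖‖b‖` give the pointwise inequality
`‖a + b‖ ^ p + ‖a - b‖ ^ p ≤ (‖a‖ + ‖b‖) ^ p + |‖a‖ - ‖b‖| ^ p`. Integrating it and applying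
Minkowski's inequality to `‖|f| + |h|‖_p` yields
`‖f + h‖_p ^ p ≤ (‖f‖_p + ‖h‖_p) ^ p + ‖|f| - |h|‖_p ^ p - ‖f - h‖_p ^ p`,
and the hypothesis bounds the middle term by `t ‖f - h‖_p ^ p`.
-/

open MeasureTheory

theorem ConvexOn.map_add_add_map_sub_le_of_abs_le {s : Set ℝ} {φ : ℝ → ℝ} (hφ : ConvexOn ℝ s φ)
    {x u v : ℝ} (hxv : x - v ∈ s) (hxv' : x + v ∈ s) (huv : |u| ≤ v) :
    φ (x + u) + φ (x - u) ≤ φ (x + v) + φ (x - v) := by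
  obtain ⟨hu₁, hu₂⟩ := abs_le.mp huv
  rcases (neg_le_self_iff.mp (hu₁.trans hu₂)).eq_or_lt with rfl | hv
  · obtain rfl : u = 0 := by linarith
    rfl
  -- `x ± u` are the convex combinations of `x - v` and `x + v` with swapped weights `a`, `b`.
  set a := (v + u) / (2 * v)
  set b := (v - u) / (2 * v)
  have ha : 0 ≤ a := div_nonneg (by linarith) (by linarith)
  have hb : 0 ≤ b := div_nonneg (by linarith) (by linarith)
  have hab : a + b = 1 := by simp only [a, b]; field_simp; ring
  have h₁ : b • (x - v) + a • (x + v) = x + u := by simp only [a, b, smul_eq_mul]; field_simp; ring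
  have h₂ : a • (x - v) + b • (x + v) = x - u := by simp only [a, b, smul_eq_mul]; field_simp; ring
  have c₁ := hφ.2 hxv hxv' hb ha (by rw [add_comm, hab])
  have c₂ := hφ.2 hxv hxv' ha hb hab
  rw [h₁] at c₁
  rw [h₂] at c₂
  simp only [smul_eq_mul] at c₁ c₂
  linear_combination c₁ + c₂ + (φ (x - v) + φ (x + v)) * hab

theorem norm_add_rpow_add_norm_sub_rpow_le {E : Type*} [NormedAddCommGroup E]
    [InnerProductSpace ℝ E] {p : ℝ} (hp : 2 ≤ p) (a b : E) :
    ‖a + b‖ ^ p + ‖a - b‖ ^ p ≤ (‖a‖ + ‖b‖) ^ p + |‖a‖ - ‖b‖| ^ p := by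
  have rpow_eq : ∀ y : ℝ, 0 ≤ y → y ^ p = (y ^ 2) ^ (p / 2) := fun y hy => by
    rw [← Real.rpow_natCast, ← Real.rpow_mul hy, Nat.cast_two, mul_div_cancel₀ _ two_ne_zero]
  have hconv : ConvexOn ℝ (Set.Ici 0) fun s : ℝ => s ^ (p / 2) := convexOn_rpow (by linarith)
  have key := hconv.map_add_add_map_sub_le_of_abs_le
    (x := ‖a‖ ^ 2 + ‖b‖ ^ 2) (u := 2 * inner ℝ a b) (v := 2 * (‖a‖ * ‖b‖))
    (Set.mem_Ici.mpr (by nlinarith [sq_nonneg (‖a‖ - ‖b‖)])) (Set.mem_Ici.mpr (by positivity))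
    (by rw [abs_mul, abs_two]; gcongr; exact abs_real_inner_le_norm a b)
  rw [rpow_eq _ (norm_nonneg _), rpow_eq _ (norm_nonneg _), rpow_eq _ (by positivity),
    rpow_eq _ (abs_nonneg _), norm_add_sq_real, norm_sub_sq_real, sq_abs]
  convert key using 3 <;> ring

namespace MeasureTheory

variable {X E : Type*} [MeasurableSpace X] {μ : Measure X} [NormedAddCommGroup E] {p : ℝ}

theorem lpNorm_rpow_eq_integral_norm_rpow (hp : 0 < p) {f : X → E}
    (hf : AEStronglyMeasurable f μ) :
    lpNorm f (ENNReal.ofReal p) μ ^ p = ∫ x, ‖f x‖ ^ p ∂μ := by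
  rw [lpNorm_eq_integral_norm_rpow_toReal (by simpa using hp) ENNReal.ofReal_ne_top hf,
    ENNReal.toReal_ofReal hp.le, ← Real.rpow_mul (integral_nonneg fun x => by positivity),
    inv_mul_cancel₀ hp.ne', Real.rpow_one]

theorem MemLp.integrable_norm_rpow_ofReal (hp : 0 < p) {f : X → E}
    (hf : MemLp f (ENNReal.ofReal p) μ) : Integrable (fun x => ‖f x‖ ^ p) μ := by
  simpa [ENNReal.toReal_ofReal hp.le] using
    hf.integrable_norm_rpow (by simpa using hp) ENNReal.ofReal_ne_top

theorem lpNorm_add_rpow_add_lpNorm_sub_rpow_le [InnerProductSpace ℝ E] (hp : 2 ≤ p)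
    {f g : X → E} (hf : MemLp f (ENNReal.ofReal p) μ) (hg : MemLp g (ENNReal.ofReal p) μ) :
    lpNorm (f + g) (ENNReal.ofReal p) μ ^ p + lpNorm (f - g) (ENNReal.ofReal p) μ ^ p ≤
      lpNorm (fun x => ‖f x‖ + ‖g x‖) (ENNReal.ofReal p) μ ^ p +
        lpNorm (fun x => ‖f x‖ - ‖g x‖) (ENNReal.ofReal p) μ ^ p := by
  have hp₀ : 0 < p := by linarith
  have hadd : MemLp (f + g) (ENNReal.ofReal p) μ := hf.add hg
  have hsub : MemLp (f - g) (ENNReal.ofReal p) μ := hf.sub hg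
  have hsum : MemLp (fun x => ‖f x‖ + ‖g x‖) (ENNReal.ofReal p) μ := hf.norm.add hg.norm
  have hdiff : MemLp (fun x => ‖f x‖ - ‖g x‖) (ENNReal.ofReal p) μ := hf.norm.sub hg.norm
  have i₁ := hadd.integrable_norm_rpow_ofReal hp₀
  have i₂ := hsub.integrable_norm_rpow_ofReal hp₀
  have i₃ := hsum.integrable_norm_rpow_ofReal hp₀
  have i₄ := hdiff.integrable_norm_rpow_ofReal hp₀
  rw [lpNorm_rpow_eq_integral_norm_rpow hp₀ hadd.1, lpNorm_rpow_eq_integral_norm_rpow hp₀ hsub.1,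
    lpNorm_rpow_eq_integral_norm_rpow hp₀ hsum.1, lpNorm_rpow_eq_integral_norm_rpow hp₀ hdiff.1,
    ← integral_add i₁ i₂, ← integral_add i₃ i₄]
  refine integral_mono (i₁.add i₂) (i₃.add i₄) fun x => ?_
  simpa [abs_of_nonneg (add_nonneg (norm_nonneg (f x)) (norm_nonneg (g x)))] using
    norm_add_rpow_add_norm_sub_rpow_le hp (f x) (g x)

end MeasureTheory

theorem stmt_18_general {X : Type*} [MeasurableSpace X] (μ : Measure X)
    (p t : ℝ) (hp : 2 ≤ p)
    (f h : X → ℂ)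
    (hf : MemLp f (ENNReal.ofReal p) μ) (hh : MemLp h (ENNReal.ofReal p) μ)
    (hsmall : (eLpNorm (fun x => ‖f x‖ - ‖h x‖) (ENNReal.ofReal p) μ).toReal ^ p <
      t * (eLpNorm (f - h) (ENNReal.ofReal p) μ).toReal ^ p) :
    (eLpNorm (f + h) (ENNReal.ofReal p) μ).toReal ^ p <
      ((eLpNorm f (ENNReal.ofReal p) μ).toReal + (eLpNorm h (ENNReal.ofReal p) μ).toReal) ^ p -
        (1 - t) * (eLpNorm (f - h) (ENNReal.ofReal p) μ).toReal ^ p := by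
  rw [toReal_eLpNorm (f := fun x => ‖f x‖ - ‖h x‖) (hf.1.norm.sub hh.1.norm),
    toReal_eLpNorm (hf.sub hh).1] at hsmall
  rw [toReal_eLpNorm (hf.add hh).1, toReal_eLpNorm (hf.sub hh).1, toReal_eLpNorm hf.1,
    toReal_eLpNorm hh.1]
  have minkowski : lpNorm (fun x => ‖f x‖ + ‖h x‖) (ENNReal.ofReal p) μ ≤
      lpNorm f (ENNReal.ofReal p) μ + lpNorm h (ENNReal.ofReal p) μ := by
    have := lpNorm_add_le hf.norm (g := fun x => ‖h x‖) (ENNReal.one_le_ofReal.mpr (by linarith))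
    rwa [lpNorm_norm hf.1, lpNorm_norm hh.1] at this
  have clarkson := lpNorm_add_rpow_add_lpNorm_sub_rpow_le hp hf hh
  have minkowski_rpow := Real.rpow_le_rpow lpNorm_nonneg minkowski (by linarith : 0 ≤ p)
  linarith

theorem stmt_18 {X : Type*} [MeasurableSpace X] (μ : Measure X)
    (p t : ℝ) (hp : 2 ≤ p) (ht0 : 0 < t) (ht1 : t < 1)
    (f h : X → ℂ)
    (hf : MemLp f (ENNReal.ofReal p) μ) (hh : MemLp h (ENNReal.ofReal p) μ)
    (hsmall : (eLpNorm (fun x => ‖f x‖ - ‖h x‖) (ENNReal.ofReal p) μ).toReal ^ p <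
      t * (eLpNorm (f - h) (ENNReal.ofReal p) μ).toReal ^ p) :
    (eLpNorm (f + h) (ENNReal.ofReal p) μ).toReal ^ p <
      ((eLpNorm f (ENNReal.ofReal p) μ).toReal + (eLpNorm h (ENNReal.ofReal p) μ).toReal) ^ p -
        (1 - t) * (eLpNorm (f - h) (ENNReal.ofReal p) μ).toReal ^ p :=
  stmt_18_general μ p t hp f h hf hh hsmall
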